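/- Under the setting where l ≤ W_{ij} ≤ u and |W_{ij} − Ŵ_{ij}| ≤ δl for all i, j (0 < δ < 1, 0 < l < u), with degree matrices D, D̂ of W, Ŵ, the perturbation H₂ = D̂^{−1/2} (W − Ŵ) D^{−1/2} satisfies ‖H₂‖₂ ≤ (1−δ)^{−1/2} δ. -/
import Mathlib


open Matrix

/-- The operator 2-norm (largest singular value) of an `n × n` real matrix. -/
noncomputable def l2OpNorm {n : ℕ} (A : Matrix (Fin n) (Fin n) ℝ) : ℝ :=
  ‖LinearMap.toContinuousLinearMap (Matrix.toEuclideanLin A)‖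

open scoped Matrix.Norms.L2Operator in
lemma l2OpNorm_eq_norm {n : ℕ} (A : Matrix (Fin n) (Fin n) ℝ) : l2OpNorm A = ‖A‖ := rfl

lemma l2OpNorm_nonneg {n : ℕ} (A : Matrix (Fin n) (Fin n) ℝ) : 0 ≤ l2OpNorm A :=
  norm_nonneg _

open scoped Matrix.Norms.L2Operator in
lemma l2OpNorm_mul_le {n : ℕ} (A B : Matrix (Fin n) (Fin n) ℝ) :
    l2OpNorm (A * B) ≤ l2OpNorm A * l2OpNorm B := by
  simpa only [l2OpNorm_eq_norm] using Matrix.l2_opNorm_mul A B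

lemma l2OpNorm_le_bound {n : ℕ} (A : Matrix (Fin n) (Fin n) ℝ) (c : ℝ) (hc : 0 ≤ c)
    (h : ∀ x : Fin n → ℝ, Real.sqrt (∑ i, (A *ᵥ x) i ^ 2) ≤ c * Real.sqrt (∑ i, x i ^ 2)) :
    l2OpNorm A ≤ c := by
  apply ContinuousLinearMap.opNorm_le_bound _ hc
  intro x
  have hx : ‖x‖ = Real.sqrt (∑ i, ((WithLp.equiv 2 (Fin n → ℝ)) x i) ^ 2) := by
    rw [EuclideanSpace.norm_eq]
    congr 1
    apply Finset.sum_congr rfl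
    intro i _
    rw [Real.norm_eq_abs, sq_abs]
    rfl
  have hAx : ‖(LinearMap.toContinuousLinearMap (Matrix.toEuclideanLin A)) x‖ =
      Real.sqrt (∑ i, (A *ᵥ (WithLp.equiv 2 (Fin n → ℝ)) x) i ^ 2) := by
    rw [EuclideanSpace.norm_eq]
    congr 1
    apply Finset.sum_congr rfl
    intro i _
    rw [Real.norm_eq_abs, sq_abs]
    rfl
  rw [hx, hAx]
  exact h _

lemma l2OpNorm_diagonal_le {n : ℕ} (d : Fin n → ℝ) (c : ℝ) (hc : 0 ≤ c)
    (h : ∀ i, |d i| ≤ c) : l2OpNorm (Matrix.diagonal d) ≤ c := by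
  apply l2OpNorm_le_bound _ c hc
  intro x
  rw [← Real.sqrt_sq hc, ← Real.sqrt_mul (sq_nonneg c)]
  apply Real.sqrt_le_sqrt
  rw [Finset.mul_sum]
  apply Finset.sum_le_sum
  intro i _
  rw [Matrix.mulVec_diagonal, mul_pow]
  have : d i ^ 2 ≤ c ^ 2 := by
    rw [← sq_abs (d i)]
    exact pow_le_pow_left₀ (abs_nonneg _) (h i) 2
  nlinarith [sq_nonneg (x i)]

lemma l2OpNorm_le_of_entries {n : ℕ} (A : Matrix (Fin n) (Fin n) ℝ) (c : ℝ) (hc : 0 ≤ c)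
    (h : ∀ i j, |A i j| ≤ c) : l2OpNorm A ≤ (n : ℝ) * c := by
  apply l2OpNorm_le_bound _ _ (by positivity)
  intro x
  rw [← Real.sqrt_sq (by positivity : (0:ℝ) ≤ (n:ℝ) * c), ← Real.sqrt_mul (sq_nonneg _)]
  apply Real.sqrt_le_sqrt
  have key : ∀ i : Fin n, (A *ᵥ x) i ^ 2 ≤ ((n : ℝ) * c ^ 2) * ∑ j, x j ^ 2 := by
    intro i
    have h1 : (A *ᵥ x) i = ∑ j, A i j * x j := rfl
    have h2 : (∑ j, A i j * x j) ^ 2 ≤ (∑ j, A i j ^ 2) * ∑ j, x j ^ 2 :=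
      Finset.sum_mul_sq_le_sq_mul_sq _ _ _
    have h3 : (∑ j : Fin n, A i j ^ 2) ≤ (n : ℝ) * c ^ 2 := by
      calc (∑ j : Fin n, A i j ^ 2) ≤ ∑ _j : Fin n, c ^ 2 := by
            apply Finset.sum_le_sum
            intro j _
            rw [← sq_abs (A i j)]
            exact pow_le_pow_left₀ (abs_nonneg _) (h i j) 2
        _ = (n : ℝ) * c ^ 2 := by simp [mul_comm]
    rw [h1]
    calc (∑ j, A i j * x j) ^ 2 ≤ (∑ j, A i j ^ 2) * ∑ j, x j ^ 2 := h2
      _ ≤ ((n : ℝ) * c ^ 2) * ∑ j, x j ^ 2 := by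
          apply mul_le_mul_of_nonneg_right h3
          positivity
  calc (∑ i, (A *ᵥ x) i ^ 2) ≤ ∑ _i : Fin n, ((n : ℝ) * c ^ 2) * ∑ j, x j ^ 2 :=
        Finset.sum_le_sum fun i _ => key i
    _ = ((n : ℝ) * c) ^ 2 * ∑ j, x j ^ 2 := by
        rw [Finset.sum_const, Finset.card_fin]
        push_cast
        ring

/-- Bound on `H₂ = D̂^{−1/2} (W − Ŵ) D^{−1/2}`:
`‖H₂‖₂ ≤ (1−δ)^{−1/2} δ`. -/
theorem perturbation_H2_bound {n : ℕ}
    (W What : Matrix (Fin n) (Fin n) ℝ)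
    (δ l u : ℝ) (hδ0 : 0 < δ) (hδ1 : δ < 1) (hl : 0 < l) (hlu : l < u)
    (hW : ∀ i j, l ≤ W i j ∧ W i j ≤ u)
    (hdiff : ∀ i j, |W i j - What i j| ≤ δ * l)
    (P Phat : Matrix (Fin n) (Fin n) ℝ)
    (hP : P = Matrix.diagonal fun i => (∑ j, W i j) ^ (-(1 : ℝ) / 2))
    (hPhat : Phat = Matrix.diagonal fun i => (∑ j, What i j) ^ (-(1 : ℝ) / 2)) :
    l2OpNorm (Phat * (W - What) * P) ≤ (1 - δ) ^ (-(1 : ℝ) / 2) * δ := by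
  have h1δ : (0:ℝ) < 1 - δ := by linarith
  rcases Nat.eq_zero_or_pos n with hn | hn
  · subst hn
    have : l2OpNorm (Phat * (W - What) * P) = 0 := by
      unfold l2OpNorm
      exact ContinuousLinearMap.opNorm_subsingleton _
    rw [this]
    positivity
  have hnpos : (0:ℝ) < (n:ℝ) := by exact_mod_cast hn
  set e : ℝ := -(1:ℝ)/2 with he
  have he0 : e ≤ 0 := by norm_num [he]
  -- lower bounds on row sums
  have hSW : ∀ i, (n:ℝ) * l ≤ ∑ j, W i j := by
    intro i
    calc (n:ℝ) * l = ∑ _j : Fin n, l := by rw [Finset.sum_const, Finset.card_fin]; ring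
      _ ≤ ∑ j, W i j := Finset.sum_le_sum fun j _ => (hW i j).1
  have hSWhat : ∀ i, (n:ℝ) * ((1 - δ) * l) ≤ ∑ j, What i j := by
    intro i
    calc (n:ℝ) * ((1 - δ) * l) = ∑ _j : Fin n, (1 - δ) * l := by
          rw [Finset.sum_const, Finset.card_fin]; ring
      _ ≤ ∑ j, What i j := by
          apply Finset.sum_le_sum
          intro j _
          have := abs_le.mp (hdiff i j)
          have := (hW i j).1
          nlinarith
  have hnl : (0:ℝ) < (n:ℝ) * l := by positivity
  have hnl1 : (0:ℝ) < (n:ℝ) * ((1 - δ) * l) := by positivity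
  -- norm bounds on the three factors
  have hPnorm : l2OpNorm P ≤ ((n:ℝ) * l) ^ e := by
    rw [hP]
    apply l2OpNorm_diagonal_le _ _ (Real.rpow_nonneg hnl.le e)
    intro i
    rw [abs_of_nonneg (Real.rpow_nonneg (le_trans hnl.le (hSW i)) e)]
    exact Real.rpow_le_rpow_of_nonpos hnl (hSW i) he0
  have hPhatnorm : l2OpNorm Phat ≤ ((n:ℝ) * ((1 - δ) * l)) ^ e := by
    rw [hPhat]
    apply l2OpNorm_diagonal_le _ _ (Real.rpow_nonneg hnl1.le e)
    intro i
    rw [abs_of_nonneg (Real.rpow_nonneg (le_trans hnl1.le (hSWhat i)) e)]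
    exact Real.rpow_le_rpow_of_nonpos hnl1 (hSWhat i) he0
  have hDnorm : l2OpNorm (W - What) ≤ (n:ℝ) * (δ * l) := by
    apply l2OpNorm_le_of_entries _ _ (by positivity)
    intro i j
    simpa using hdiff i j
  -- combine
  have hchain : l2OpNorm (Phat * (W - What) * P) ≤
      ((n:ℝ) * ((1 - δ) * l)) ^ e * ((n:ℝ) * (δ * l)) * (((n:ℝ) * l) ^ e) := by
    calc l2OpNorm (Phat * (W - What) * P)
        ≤ l2OpNorm (Phat * (W - What)) * l2OpNorm P := l2OpNorm_mul_le _ _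
      _ ≤ (l2OpNorm Phat * l2OpNorm (W - What)) * l2OpNorm P := by
          apply mul_le_mul_of_nonneg_right (l2OpNorm_mul_le _ _) (l2OpNorm_nonneg _)
      _ ≤ (((n:ℝ) * ((1 - δ) * l)) ^ e * ((n:ℝ) * (δ * l))) * (((n:ℝ) * l) ^ e) := by
          apply mul_le_mul
          · exact mul_le_mul hPhatnorm hDnorm (l2OpNorm_nonneg _)
              (Real.rpow_nonneg hnl1.le e)
          · exact hPnorm
          · exact l2OpNorm_nonneg _
          · positivity
  refine hchain.trans_eq ?_
  have key : ((n:ℝ) * ((1 - δ) * l)) ^ e = (1 - δ) ^ e * ((n:ℝ) * l) ^ e := by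
    rw [show (n:ℝ) * ((1 - δ) * l) = (1 - δ) * ((n:ℝ) * l) by ring,
      Real.mul_rpow h1δ.le hnl.le]
  rw [key]
  have hee : ((n:ℝ) * l) ^ e * ((n:ℝ) * l) ^ e = ((n:ℝ) * l)⁻¹ := by
    rw [← Real.rpow_add hnl, show e + e = -1 by norm_num [he], Real.rpow_neg_one]
  calc (1 - δ) ^ e * ((n:ℝ) * l) ^ e * ((n:ℝ) * (δ * l)) * ((n:ℝ) * l) ^ e
      = (1 - δ) ^ e * (((n:ℝ) * l) ^ e * ((n:ℝ) * l) ^ e) * (((n:ℝ) * l) * δ) := by ring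
    _ = (1 - δ) ^ e * (((n:ℝ) * l)⁻¹ * ((n:ℝ) * l)) * δ := by rw [hee]; ring
    _ = (1 - δ) ^ e * δ := by rw [inv_mul_cancel₀ hnl.ne']; ring
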